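/- arXiv:2408.14697 — 2 statements merged into one kernel-verified Lean document; each statement's English description precedes it below -/
import Mathlib

section
/- Let d ≥ 1, let ε : Fin d → ℤ take values in {1, −1}, and let n be the number of indices i with ε(i) = −1. Then the rank of the diagonal matrix Γ — i.e., the number of nonzero entries among the d values ε(i) together with, for each unordered pair i < j, two copies of ε(i) + ε(j) — equals d + 2·|{(i,j) : i < j and ε(i) = ε(j)}| = d(d − 2n) + 2n² = d² − 2n(d − n). In particular the rank equals d² exactly when n = 0 or n = d. -/
open Finset

/-- Rank of the diagonal matrix `Γ`: for `ε : Fin d → {±1}` with `n` entries equal to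
`−1`, the number of nonzero diagonal entries of `Γ` (the `d` values `ε i` together with
two copies of `ε i + ε j` for each pair `i < j`) equals
`d + 2·#{(i,j) : i < j, ε i = ε j} = d(d − 2n) + 2n² = d² − 2n(d − n)`; it equals `d²`
exactly when `n = 0` or `n = d`. -/
theorem gamma_rank
    {d : ℕ} (hd : 1 ≤ d) (ε : Fin d → ℤ) (hε : ∀ i, ε i = 1 ∨ ε i = -1)
    (n : ℕ) (hn : n = (univ.filter fun i => ε i = -1).card)
    (r : ℕ)
    (hr : r = (univ.filter fun i => ε i ≠ 0).card +
      2 * (univ.filter fun p : Fin d × Fin d => p.1 < p.2 ∧ ε p.1 + ε p.2 ≠ 0).card) :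
    (r : ℤ) = d + 2 * (univ.filter fun p : Fin d × Fin d => p.1 < p.2 ∧ ε p.1 = ε p.2).card ∧
    (r : ℤ) = (d : ℤ) * ((d : ℤ) - 2 * n) + 2 * n ^ 2 ∧
    (r : ℤ) = (d : ℤ) ^ 2 - 2 * n * ((d : ℤ) - n) ∧
    (r = d ^ 2 ↔ n = 0 ∨ n = d) := by
  classical
  set N : Finset (Fin d) := univ.filter fun i => ε i = -1 with hN
  set P : Finset (Fin d) := univ.filter fun i => ε i = 1 with hP
  set m : ℕ := P.card with hm
  -- ε i ≠ 0 always
  have hne : ∀ i, ε i ≠ 0 := by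
    intro i; rcases hε i with h | h <;> simp [h]
  have h1 : (univ.filter fun i => ε i ≠ 0).card = d := by
    rw [filter_true_of_mem (fun i _ => hne i)]
    simp
  -- sum condition ↔ equality
  have hiff : ∀ p : Fin d × Fin d, (ε p.1 + ε p.2 ≠ 0) ↔ (ε p.1 = ε p.2) := by
    rintro ⟨i, j⟩
    rcases hε i with h | h <;> rcases hε j with h' | h' <;> simp [h, h'] <;> omega
  have hfeq : (univ.filter fun p : Fin d × Fin d => p.1 < p.2 ∧ ε p.1 + ε p.2 ≠ 0) =
      (univ.filter fun p : Fin d × Fin d => p.1 < p.2 ∧ ε p.1 = ε p.2) := by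
    apply filter_congr; intro p _; rw [hiff p]
  -- n + m = d
  have hnm : n + m = d := by
    rw [hn, hm, hP, hN]
    rw [← card_union_of_disjoint]
    · rw [filter_union_right]
      have : (univ.filter fun i => ε i = -1 ∨ ε i = 1).card = (univ : Finset (Fin d)).card := by
        congr 1
        apply filter_true_of_mem
        intro i _; rcases hε i with h | h <;> simp [h]
      rw [this]; simp
    · rw [disjoint_filter]
      intro i _ h h'; rw [h] at h'; omega
  -- A = all ordered pairs with equal values
  set A : Finset (Fin d × Fin d) := univ.filter fun p => ε p.1 = ε p.2 with hA
  have hAcard : A.card = n * n + m * m := by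
    have : A = N ×ˢ N ∪ P ×ˢ P := by
      ext ⟨i, j⟩
      simp only [hA, hN, hP, mem_filter, mem_union, mem_product, mem_univ, true_and]
      constructor
      · intro h
        rcases hε i with hi | hi <;> rcases hε j with hj | hj <;>
          simp [hi, hj] at h ⊢ <;> omega
      · rintro (⟨hi, hj⟩ | ⟨hi, hj⟩) <;> rw [hi, hj]
    rw [this, card_union_of_disjoint, card_product, card_product, hn, hm]
    rw [disjoint_left]
    rintro ⟨i, j⟩ h h'
    simp only [mem_product, hN, hP, mem_filter, mem_univ, true_and] at h h'
    rw [h.1] at h'; omega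
  set T : Finset (Fin d × Fin d) := univ.filter fun p => p.1 < p.2 ∧ ε p.1 = ε p.2 with hT
  -- A.card = 2 * T.card + d
  have hsplit : A.card = 2 * T.card + d := by
    have e1 : A.filter (fun p => p.1 < p.2) = T := by
      rw [hA, hT, filter_filter]
      apply filter_congr; intro p _; tauto
    have e2 : (A.filter fun p => ¬ p.1 < p.2).filter (fun p => p.2 < p.1) = T.image Prod.swap := by
      ext ⟨i, j⟩
      simp only [mem_filter, hA, hT, mem_univ, true_and, mem_image, Prod.ext_iff]
      constructor
      · rintro ⟨⟨h1, _⟩, h3⟩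
        exact ⟨(j, i), ⟨h3, h1.symm⟩, rfl, rfl⟩
      · rintro ⟨⟨a, b⟩, ⟨hab, he⟩, h1, h2⟩
        subst h1; subst h2
        exact ⟨⟨he.symm, not_lt_of_gt hab⟩, hab⟩
    have e3 : (A.filter fun p => ¬ p.1 < p.2).filter (fun p => ¬ p.2 < p.1)
        = (univ : Finset (Fin d)).image (fun i => (i, i)) := by
      ext ⟨i, j⟩
      simp only [mem_filter, hA, mem_univ, true_and, mem_image, Prod.ext_iff, not_lt]
      constructor
      · rintro ⟨⟨_, h1⟩, h2⟩
        have : i = j := le_antisymm h2 h1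
        exact ⟨i, rfl, this⟩
      · rintro ⟨a, h1, h2⟩; subst h1; subst h2; exact ⟨⟨rfl, le_refl _⟩, le_refl _⟩
    have c2 : ((A.filter fun p => ¬ p.1 < p.2).filter (fun p => p.2 < p.1)).card = T.card := by
      rw [e2]; apply card_image_of_injective; exact Prod.swap_injective
    have c3 : ((A.filter fun p => ¬ p.1 < p.2).filter (fun p => ¬ p.2 < p.1)).card = d := by
      have hinj : Function.Injective (fun i : Fin d => (i, i)) := by
        intro a b h; exact congrArg Prod.fst h
      rw [e3, card_image_of_injective _ hinj, card_univ, Fintype.card_fin]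
    have t1 := card_filter_add_card_filter_not (s := A) (p := fun p => p.1 < p.2)
    have t2 := card_filter_add_card_filter_not
      (s := A.filter fun p => ¬ p.1 < p.2) (p := fun p : Fin d × Fin d => p.2 < p.1)
    rw [e1] at t1
    rw [c2, c3] at t2
    omega
  have hr' : r = d + 2 * T.card := by rw [hr, h1, hfeq]
  have key : r = n * n + m * m := by omega
  refine ⟨?_, ?_, ?_, ?_⟩
  · rw [hr']; push_cast; ring
  · rw [key]; push_cast [← hnm]; ring
  · rw [key]; push_cast [← hnm]; ring
  · constructor
    · intro h
      have : n * m = 0 := by nlinarith [key, hnm, h, sq_nonneg (n - m)]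
      rcases Nat.mul_eq_zero.mp this with h0 | h0
      · left; exact h0
      · right; omega
    · rintro (h0 | h0)
      · have : m = d := by omega
        rw [key, h0, this]; ring
      · have : m = 0 := by omega
        rw [key, h0, this]; ring
end

section
/- Let d ≥ 1 and let n be an integer with 0 < n < d. Then |d(d − 2n)| < d(d − 2n) + 2n²; that is, the absolute value of the signature of the Hessian congruence matrix Γ is strictly smaller than its rank, so every critical point of the Frobenius loss with 0 < n < d eigenvalues of χ = U†W equal to −1 is a saddle point (its Hessian has both a positive and a negative eigenvalue), while n = 0 gives the unique global minimum and n = d the unique global maximum. -/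
/-- For `0 < n < d`, `|d(d − 2n)| < d(d − 2n) + 2n²`: the absolute value of the signature
of the Hessian congruence matrix `Γ` is strictly smaller than its rank, so every critical
point with `0 < n < d` eigenvalues `−1` is a saddle point. -/
theorem gamma_signature_lt_rank
    (d n : ℕ) (hd : 1 ≤ d) (hn : 0 < n) (hnd : n < d) :
    |(d : ℤ) * ((d : ℤ) - 2 * n)| < (d : ℤ) * ((d : ℤ) - 2 * n) + 2 * n ^ 2 := by
  have hn' : (1 : ℤ) ≤ n := by exact_mod_cast hn
  have hnd' : (n : ℤ) < d := by exact_mod_cast hnd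
  rcases abs_cases ((d : ℤ) * ((d : ℤ) - 2 * n)) with ⟨h, _⟩ | ⟨h, _⟩ <;> rw [h] <;> nlinarith [sq_nonneg ((n : ℤ) - d)]
end
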